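/- Let H = (V,H) be a boolean representable simplicial complex and let τ be an equivalence relation on V. Then τ is contained in the relation η (where a η b iff cl({a}) = cl({b})) if and only if τ is the kernel of some rank-preserving simplicial map from H to some simplicial complex H'. -/

import Mathlib

open scoped Classical

variable {V : Type}

def IsSC (faces : Set (Finset V)) : Prop :=
  (∀ v : V, ({v} : Finset V) ∈ faces) ∧
    ∀ ⦃X Y : Finset V⦄, X ∈ faces → Y ⊆ X → Y ∈ faces

def IsFlat (faces : Set (Finset V)) (F : Set V) : Prop :=
  ∀ I ∈ faces, (I : Set V) ⊆ F → ∀ p ∉ F, insert p I ∈ faces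

def cl (faces : Set (Finset V)) (X : Set V) : Set V :=
  ⋂₀ {F : Set V | IsFlat faces F ∧ X ⊆ F}

def BRep (faces : Set (Finset V)) : Prop :=
  ∀ X ∈ faces, ∃ (k : ℕ) (F : Fin (k + 1) → Set V) (x : Fin k → V),
    (∀ i, IsFlat faces (F i)) ∧ StrictMono F ∧ Function.Injective x ∧
    (∀ i : Fin k, x i ∈ F i.succ \ F i.castSucc) ∧
    X = Finset.image x Finset.univ

def skel (faces : Set (Finset V)) : SimpleGraph V where
  Adj p q := p ≠ q ∧ ({p, q} : Finset V) ∈ faces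
  symm := ⟨by
    rintro p q ⟨h1, h2⟩
    exact ⟨h1.symm, by rwa [Finset.pair_comm]⟩⟩
  loopless := ⟨by rintro p ⟨h, _⟩; exact h rfl⟩

def flatGraph (faces : Set (Finset V)) : SimpleGraph V where
  Adj p q := p ≠ q ∧ cl faces {p, q} ≠ Set.univ
  symm := ⟨by
    rintro p q ⟨h1, h2⟩
    exact ⟨h1.symm, by rwa [Set.pair_comm]⟩⟩
  loopless := ⟨by rintro p ⟨h, _⟩; exact h rfl⟩
/-! A boolean representation of a face `X` is a chain of flats `F₀ ⊂ ⋯ ⊂ Fₖ` with the elements of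
`X` listed as `xᵢ ∈ Fᵢ₊₁ \ Fᵢ`; for `i < j` the flat `Fⱼ` contains `xᵢ` but not `xⱼ`, so distinct
elements of a face have distinct closures. Hence collapsing the classes of `τ ⊆ η` is injective on
every face. Conversely, a rank-preserving map cannot identify the two points of an edge, and two
points not forming an edge lie in exactly the same flats. -/

section

variable {faces : Set (Finset V)}

lemma cl_singleton_subset_of_isFlat {F : Set V} (hF : IsFlat faces F) {a : V} (ha : a ∈ F) :
    cl faces {a} ⊆ F :=
  Set.sInter_subset_of_mem ⟨hF, Set.singleton_subset_iff.2 ha⟩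

lemma mem_cl_singleton (a : V) : a ∈ cl faces {a} :=
  Set.mem_sInter.2 fun _ hF => hF.2 rfl

lemma cl_singleton_ne_of_isFlat {F : Set V} (hF : IsFlat faces F) {a b : V} (ha : a ∈ F)
    (hb : b ∉ F) : cl faces {a} ≠ cl faces {b} := fun h =>
  hb (cl_singleton_subset_of_isFlat hF ha (h ▸ mem_cl_singleton b))

lemma BRep.injOn_cl_singleton (hbr : BRep faces) {X : Finset V} (hX : X ∈ faces) :
    Set.InjOn (fun a => cl faces {a}) X := by
  obtain ⟨k, F, x, hF, hmono, -, hx, rfl⟩ := hbr X hX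
  have hlt : ∀ i j : Fin k, i < j → cl faces {x i} ≠ cl faces {x j} := fun i j hij =>
    cl_singleton_ne_of_isFlat (hF j.castSucc)
      (hmono.monotone (Fin.succ_le_castSucc_iff.2 hij) (hx i).1) (hx j).2
  intro a ha b hb hab
  obtain ⟨i, -, rfl⟩ := Finset.mem_image.1 ha
  obtain ⟨j, -, rfl⟩ := Finset.mem_image.1 hb
  rcases lt_trichotomy i j with h | rfl | h
  · exact absurd hab (hlt i j h)
  · rfl
  · exact absurd hab.symm (hlt j i h)

lemma BRep.card_image_eq {W : Type} (hbr : BRep faces) {φ : V → W}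
    (hφ : ∀ a b, φ a = φ b → cl faces {a} = cl faces {b}) {X : Finset V} (hX : X ∈ faces) :
    (X.image φ).card = X.card :=
  Finset.card_image_iff.2 fun a ha b hb h => hbr.injOn_cl_singleton hX ha hb (hφ a b h)

lemma IsFlat.mem_of_pair_notMem {F : Set V} (hF : IsFlat faces F) {a b : V}
    (ha : ({a} : Finset V) ∈ faces) (hab : ({a, b} : Finset V) ∉ faces) (haF : a ∈ F) : b ∈ F := by
  by_contra hbF
  have := hF {a} ha (by simpa using haF) b hbF
  rw [Finset.pair_comm] at hab
  exact hab this

lemma cl_singleton_eq_of_pair_notMem (hsc : IsSC faces) {a b : V}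
    (hab : ({a, b} : Finset V) ∉ faces) : cl faces {a} = cl faces {b} := by
  have hba : ({b, a} : Finset V) ∉ faces := by rwa [Finset.pair_comm]
  unfold cl
  congr 1
  ext F
  simp only [Set.mem_ofPred_eq, Set.singleton_subset_iff]
  exact ⟨fun ⟨hF, ha⟩ => ⟨hF, hF.mem_of_pair_notMem (hsc.1 a) hab ha⟩,
    fun ⟨hF, hb⟩ => ⟨hF, hF.mem_of_pair_notMem (hsc.1 b) hba hb⟩⟩

lemma pair_notMem_of_card_image_eq {W : Type} {φ : V → W}
    (hcard : ∀ X ∈ faces, (X.image φ).card = X.card) {a b : V} (hne : a ≠ b) (hφ : φ a = φ b) :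
    ({a, b} : Finset V) ∉ faces := fun hab =>
  hne (Finset.card_image_iff.1 (hcard _ hab) (by simp) (by simp) hφ)

end

def imageFaces {W : Type} (faces : Set (Finset V)) (φ : V → W) : Set (Finset W) :=
  {Y | ∃ X ∈ faces, Y ⊆ X.image φ}

lemma IsSC.imageFaces {W : Type} {faces : Set (Finset V)} (hsc : IsSC faces) {φ : V → W}
    (hφ : Function.Surjective φ) : IsSC (imageFaces faces φ) := by
  refine ⟨fun w => ?_, fun X Y ⟨Z, hZ, hXZ⟩ hYX => ⟨Z, hZ, hYX.trans hXZ⟩⟩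
  obtain ⟨v, rfl⟩ := hφ w
  exact ⟨{v}, hsc.1 v, by simp⟩

theorem ker_rank_preserving_iff_sub_eta_general
    {faces : Set (Finset V)} (hsc : IsSC faces) (hbr : BRep faces)
    (τ : V → V → Prop) (hτ : Equivalence τ) :
    (∀ a b : V, τ a b → cl faces {a} = cl faces {b}) ↔
      ∃ (W : Type) (faces' : Set (Finset W)) (φ : V → W),
        IsSC faces' ∧ (∀ X ∈ faces, X.image φ ∈ faces') ∧
        (∀ X ∈ faces, (X.image φ).card = X.card) ∧
        (∀ a b : V, τ a b ↔ φ a = φ b) := by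
  constructor
  · intro hsub
    let s : Setoid V := ⟨τ, hτ⟩
    refine ⟨Quotient s, imageFaces faces (Quotient.mk s), Quotient.mk s,
      hsc.imageFaces Quotient.mk_surjective, fun X hX => ⟨X, hX, subset_rfl⟩,
      fun X hX => hbr.card_image_eq (fun a b h => hsub a b (Quotient.exact h)) hX,
      fun a b => ⟨fun h => Quotient.sound h, Quotient.exact⟩⟩
  · rintro ⟨W, faces', φ, -, -, hcard, hker⟩ a b hab
    by_cases hne : a = b
    · rw [hne]
    · exact cl_singleton_eq_of_pair_notMem hsc
        (pair_notMem_of_card_image_eq hcard hne ((hker a b).1 hab))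

theorem ker_rank_preserving_iff_sub_eta [Fintype V] [Nonempty V]
    {faces : Set (Finset V)} (hsc : IsSC faces) (hbr : BRep faces)
    (τ : V → V → Prop) (hτ : Equivalence τ) :
    (∀ a b : V, τ a b → cl faces {a} = cl faces {b}) ↔
      ∃ (W : Type) (faces' : Set (Finset W)) (φ : V → W),
        IsSC faces' ∧ (∀ X ∈ faces, X.image φ ∈ faces') ∧
        (∀ X ∈ faces, (X.image φ).card = X.card) ∧
        (∀ a b : V, τ a b ↔ φ a = φ b) :=
  ker_rank_preserving_iff_sub_eta_general hsc hbr τ hτ
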